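/- arXiv:1601.03290 — 5 statements merged into one kernel-verified Lean document; each statement's English description precedes it below -/
import Mathlib

section
/- Let P ∈ ℝ^{n₀×n₀} be symmetric positive definite, F₀ ∈ ℝ^{l×n₀}, S₀ ∈ ℝ^{n₀×n₀}, and let λ̄ > 0 and λ ≥ λ̄. Set μ* = max{1/λ̄, 1} and L₀ = −μ*·P⁻¹F₀ᵀ. Then (S₀ + λL₀F₀)ᵀP + P(S₀ + λL₀F₀) ≼ S₀ᵀP + PS₀ − 2F₀ᵀF₀. In particular, if S₀ᵀP + PS₀ − 2F₀ᵀF₀ is negative definite, then (S₀ + λL₀F₀)ᵀP + P(S₀ + λL₀F₀) is negative definite. -/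
/-! Since `P * L₀ = -μ* • F₀ᵀ`, the injection term `λ L₀ F₀` adds exactly `-2λμ* F₀ᵀF₀` to the
Lyapunov form, and `λμ* ≥ λ̄ · (1/λ̄) = 1`; the gap to `S₀ᵀP + PS₀ - 2F₀ᵀF₀` is therefore the
Gram matrix `F₀ᵀF₀` scaled by `2(λμ* - 1) ≥ 0`. -/

open Matrix

namespace Matrix

variable {n m R : Type*} [Fintype n] [CommRing R]

def lyapunovForm (P A : Matrix n n R) : Matrix n n R := Aᵀ * P + P * A

lemma lyapunovForm_add (P A B : Matrix n n R) :
    lyapunovForm P (A + B) = lyapunovForm P A + lyapunovForm P B := by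
  simp only [lyapunovForm, transpose_add, add_mul, mul_add]
  abel

lemma lyapunovForm_smul (P A : Matrix n n R) (c : R) :
    lyapunovForm P (c • A) = c • lyapunovForm P A := by
  simp only [lyapunovForm, transpose_smul, smul_mul, Matrix.mul_smul, smul_add]

lemma lyapunovForm_inv_mul_transpose_mul [DecidableEq n] [Fintype m] {P : Matrix n n R}
    (hPT : Pᵀ = P) (hP : IsUnit P.det) (F : Matrix m n R) :
    lyapunovForm P (P⁻¹ * Fᵀ * F) = (2 : R) • (Fᵀ * F) := by
  have hPinvT : (P⁻¹)ᵀ = P⁻¹ := by rw [transpose_nonsing_inv, hPT]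
  simp only [lyapunovForm, transpose_mul, transpose_transpose, hPinvT, Matrix.mul_assoc,
    nonsing_inv_mul P hP, Matrix.mul_one, mul_nonsing_inv_cancel_left P _ hP, two_smul]

end Matrix

lemma one_le_mul_max_one_div_one {K : Type*} [Field K] [LinearOrder K] [IsStrictOrderedRing K]
    {a b : K} (ha : 0 < a) (hab : a ≤ b) : 1 ≤ b * max (1 / a) 1 :=
  calc (1 : K) = a * (1 / a) := by field_simp
    _ ≤ b * max (1 / a) 1 := mul_le_mul hab (le_max_left _ _) (by positivity) (ha.le.trans hab)

theorem stmt1 {n₀ l : ℕ}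
    (P S₀ : Matrix (Fin n₀) (Fin n₀) ℝ) (F₀ : Matrix (Fin l) (Fin n₀) ℝ)
    (hP : P.PosDef)
    (lb lam : ℝ) (hlb : 0 < lb) (hlam : lb ≤ lam)
    (L₀ : Matrix (Fin n₀) (Fin l) ℝ)
    (hL₀ : L₀ = -(max (1/lb) 1) • (P⁻¹ * F₀ᵀ)) :
    ((S₀ᵀ * P + P * S₀ - (2:ℝ) • (F₀ᵀ * F₀))
      - ((S₀ + lam • (L₀ * F₀))ᵀ * P + P * (S₀ + lam • (L₀ * F₀)))).PosSemidef
    ∧ ((-(S₀ᵀ * P + P * S₀ - (2:ℝ) • (F₀ᵀ * F₀))).PosDef →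
        (-((S₀ + lam • (L₀ * F₀))ᵀ * P + P * (S₀ + lam • (L₀ * F₀)))).PosDef) := by
  set μ := max (1/lb) 1
  have hPT : Pᵀ = P := by simpa using hP.isHermitian.eq
  have hclosed : lyapunovForm P (S₀ + lam • (L₀ * F₀))
      = lyapunovForm P S₀ - (2 * (lam * μ)) • (F₀ᵀ * F₀) := by
    rw [hL₀, smul_mul, smul_smul, lyapunovForm_add, lyapunovForm_smul,
      lyapunovForm_inv_mul_transpose_mul hPT (isUnit_iff_ne_zero.mpr hP.det_pos.ne'), smul_smul]
    module
  have hgap : (S₀ᵀ * P + P * S₀ - (2:ℝ) • (F₀ᵀ * F₀)) - lyapunovForm P (S₀ + lam • (L₀ * F₀))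
      = (2 * (lam * μ - 1)) • (F₀ᵀ * F₀) := by
    rw [hclosed, lyapunovForm]
    module
  have hpsd : ((S₀ᵀ * P + P * S₀ - (2:ℝ) • (F₀ᵀ * F₀))
      - lyapunovForm P (S₀ + lam • (L₀ * F₀))).PosSemidef := by
    have hgram : (F₀ᵀ * F₀).PosSemidef := by simpa using posSemidef_conjTranspose_mul_self F₀
    rw [hgap]
    refine hgram.smul ?_
    linarith [one_le_mul_max_one_div_one hlb hlam]
  refine ⟨hpsd, fun hneg => ?_⟩
  convert hneg.add_posSemidef hpsd using 1
  rw [lyapunovForm]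
  abel
end

section
/- Let S₀ ∈ ℝ^{n₀×n₀}, F₀ ∈ ℝ^{l×n₀}, and P ∈ ℝ^{n₀×n₀} symmetric positive definite with S₀ᵀP + PS₀ − 2F₀ᵀF₀ negative definite. Let 𝒫 = {1,…,κ} and for each p ∈ 𝒫 let H_p ∈ ℝ^{N×N} be symmetric positive definite, and let λ̄ > 0 be a lower bound for all eigenvalues of all H_p. Set L₀ = −max{1/λ̄, 1}·P⁻¹F₀ᵀ. Let 0 = t₀ < t₁ < ⋯ be a strictly increasing sequence with tᵢ → ∞ and σ : [0,∞) → 𝒫 constant on each [tᵢ, tᵢ₊₁). Let η̄ : [0,∞) → ℝ^{Nn₀} be continuous, differentiable on each (tᵢ, tᵢ₊₁), and satisfy η̄'(t) = (I_N ⊗ S₀ + H_{σ(t)} ⊗ (L₀F₀)) η̄(t) there. Then there exist constants c₀ ≥ 0 and λ₀ > 0 (with c₀ depending on η̄(0)) such that ‖η̄(t)‖ ≤ c₀·e^{−λ₀ t} for all t ≥ 0. -/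
/-!
`V(x) = xᵀ (I_N ⊗ P) x` is a common Lyapunov function for all modes. Since `P L₀ F₀ = -μ F₀ᵀF₀`
with `μ = max (1/λ̄) 1`, its derivative along mode `p` is
`xᵀ (I_N ⊗ (S₀ᵀP + PS₀ - 2F₀ᵀF₀)) x - 2 xᵀ ((μ H_p - I_N) ⊗ F₀ᵀF₀) x`,
and `μ H_p - I_N ≥ 0` because `μ λ̄ ≥ 1`; comparing quadratic forms with `‖x‖²` gives
`V' ≤ -c V` with `c` independent of `p`. As `V ∘ η̄` is continuous across the switching times,
`e^{ct} V(η̄ t)` is antitone on every `[tᵢ, tᵢ₊₁]`, hence on `[0, ∞)`.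
-/

open Matrix Filter Kronecker Set

section Homogeneous

variable {E : Type*} [NormedAddCommGroup E] [NormedSpace ℝ E] {f : E → ℝ}

lemma map_zero_of_homogeneous (hf : ∀ (c : ℝ) x, f (c • x) = c ^ 2 * f x) : f 0 = 0 := by
  simpa using hf 0 0

lemma eq_sq_norm_mul_of_homogeneous (hf : ∀ (c : ℝ) x, f (c • x) = c ^ 2 * f x) (x : E) :
    f x = ‖x‖ ^ 2 * f (‖x‖⁻¹ • x) := by
  rcases eq_or_ne x 0 with rfl | hx
  · simp [map_zero_of_homogeneous hf]
  · rw [hf, ← mul_assoc, ← mul_pow, mul_inv_cancel₀ (norm_ne_zero_iff.mpr hx), one_pow, one_mul]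

variable [FiniteDimensional ℝ E]

lemma exists_pos_mul_sq_norm_le_of_homogeneous (hc : Continuous f)
    (hf : ∀ (c : ℝ) x, f (c • x) = c ^ 2 * f x) (hpos : ∀ x, x ≠ 0 → 0 < f x) :
    ∃ a > 0, ∀ x, a * ‖x‖ ^ 2 ≤ f x := by
  rcases subsingleton_or_nontrivial E with hE | hE
  · exact ⟨1, one_pos, fun x => by simp [Subsingleton.elim x 0, map_zero_of_homogeneous hf]⟩
  obtain ⟨u, hu, hmin⟩ := (isCompact_sphere (0 : E) 1).exists_isMinOn
    (NormedSpace.sphere_nonempty.mpr zero_le_one) hc.continuousOn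
  refine ⟨f u, hpos u (Metric.ne_of_mem_sphere hu one_ne_zero), fun x => ?_⟩
  rw [eq_sq_norm_mul_of_homogeneous hf x, mul_comm]
  rcases eq_or_ne x 0 with rfl | hx
  · simp
  · gcongr
    exact hmin (by simp [norm_smul, inv_mul_cancel₀ (norm_ne_zero_iff.mpr hx)])

lemma exists_pos_le_mul_sq_norm_of_homogeneous (hc : Continuous f)
    (hf : ∀ (c : ℝ) x, f (c • x) = c ^ 2 * f x) :
    ∃ b > 0, ∀ x, f x ≤ b * ‖x‖ ^ 2 := by
  rcases subsingleton_or_nontrivial E with hE | hE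
  · exact ⟨1, one_pos, fun x => by simp [Subsingleton.elim x 0, map_zero_of_homogeneous hf]⟩
  obtain ⟨u, hu, hmax⟩ := (isCompact_sphere (0 : E) 1).exists_isMaxOn
    (NormedSpace.sphere_nonempty.mpr zero_le_one) hc.continuousOn
  refine ⟨max (f u) 1, by positivity, fun x => ?_⟩
  rw [eq_sq_norm_mul_of_homogeneous hf x, mul_comm]
  rcases eq_or_ne x 0 with rfl | hx
  · simp
  · gcongr
    exact (hmax (by simp [norm_smul, inv_mul_cancel₀ (norm_ne_zero_iff.mpr hx)])).trans
      (le_max_left _ _)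

end Homogeneous

section Deriv

variable {𝕜 : Type*} [NontriviallyNormedField 𝕜] {ι m : Type*} [Fintype ι]
  {f g : 𝕜 → ι → 𝕜} {f' g' : ι → 𝕜} {s : 𝕜}

lemma HasDerivAt.dotProduct (hf : HasDerivAt f f' s) (hg : HasDerivAt g g' s) :
    HasDerivAt (fun s => f s ⬝ᵥ g s) (f' ⬝ᵥ g s + f s ⬝ᵥ g') s := by
  simp only [_root_.dotProduct, ← Finset.sum_add_distrib]
  exact HasDerivAt.fun_sum fun i _ => (hasDerivAt_pi.mp hf i).mul (hasDerivAt_pi.mp hg i)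

lemma HasDerivAt.mulVec (A : Matrix m ι 𝕜) (hf : HasDerivAt f f' s) :
    HasDerivAt (fun s => A *ᵥ f s) (A *ᵥ f') s :=
  hasDerivAt_pi.mpr fun i => by
    simpa [Matrix.mulVec] using (hasDerivAt_const s (A i)).dotProduct hf

lemma HasDerivAt.dotProduct_mulVec_self (A Q : Matrix ι ι 𝕜) (hf : HasDerivAt f (A *ᵥ f s) s) :
    HasDerivAt (fun s => f s ⬝ᵥ Q *ᵥ f s) (f s ⬝ᵥ (Aᵀ * Q + Q * A) *ᵥ f s) s := by
  convert hf.dotProduct (hf.mulVec Q) using 1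
  rw [add_mulVec, dotProduct_add, ← mulVec_mulVec, ← mulVec_mulVec, dotProduct_mulVec (f s),
    vecMul_transpose]

end Deriv

section Pieces

variable {t : ℕ → ℝ}

lemma antitoneOn_Ici_of_antitoneOn_Icc_succ {β : Type*} [Preorder β] {f : ℝ → β}
    (ht : Monotone t) (htop : Tendsto t atTop atTop)
    (hf : ∀ i, AntitoneOn f (Icc (t i) (t (i + 1)))) : AntitoneOn f (Ici (t 0)) := by
  have hIcc : ∀ n, AntitoneOn f (Icc (t 0) (t n)) := by
    intro n
    induction n with
    | zero => simp
    | succ n ih =>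
      rw [← Icc_union_Icc_eq_Icc (ht n.zero_le) (ht n.le_succ)]
      exact ih.union_right (hf n) (isGreatest_Icc (ht n.zero_le)) (isLeast_Icc (ht n.le_succ))
  intro a ha b hb hab
  obtain ⟨n, hn⟩ := (htop.eventually_ge_atTop b).exists
  exact hIcc n ⟨ha, hab.trans hn⟩ ⟨hb, hn⟩ hab

lemma antitoneOn_Ici_of_hasDerivAt_nonpos {f f' : ℝ → ℝ} (ht : Monotone t)
    (htop : Tendsto t atTop atTop) (hc : ContinuousOn f (Ici (t 0)))
    (hd : ∀ i, ∀ s ∈ Ioo (t i) (t (i + 1)), HasDerivAt f (f' s) s)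
    (hneg : ∀ i, ∀ s ∈ Ioo (t i) (t (i + 1)), f' s ≤ 0) : AntitoneOn f (Ici (t 0)) := by
  refine antitoneOn_Ici_of_antitoneOn_Icc_succ ht htop fun i => ?_
  refine antitoneOn_of_hasDerivWithinAt_nonpos (f' := f') (convex_Icc _ _)
    (hc.mono fun s hs => (ht i.zero_le).trans hs.1) (fun s hs => ?_) (fun s hs => ?_)
  · rw [interior_Icc] at hs ⊢
    exact (hd i s hs).hasDerivWithinAt
  · rw [interior_Icc] at hs
    exact hneg i s hs

lemma le_exp_mul_of_hasDerivAt_le {V V' : ℝ → ℝ} {c : ℝ} (ht : Monotone t)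
    (htop : Tendsto t atTop atTop) (hc : ContinuousOn V (Ici (t 0)))
    (hd : ∀ i, ∀ s ∈ Ioo (t i) (t (i + 1)), HasDerivAt V (V' s) s)
    (hle : ∀ i, ∀ s ∈ Ioo (t i) (t (i + 1)), V' s ≤ -c * V s) :
    ∀ s ∈ Ici (t 0), V s ≤ Real.exp (-c * (s - t 0)) * V (t 0) := by
  have hW : AntitoneOn (fun s => Real.exp (c * s) * V s) (Ici (t 0)) := by
    refine antitoneOn_Ici_of_hasDerivAt_nonpos
      (f' := fun s => Real.exp (c * s) * (c * V s + V' s)) ht htop (by fun_prop) (fun i s hs => ?_) (fun i s hs => ?_)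
    · exact (((hasDerivAt_id' s).const_mul c).exp.mul (hd i s hs)).congr_deriv (by ring)
    · nlinarith [hle i s hs, Real.exp_pos (c * s)]
  intro s hs
  have h : Real.exp (c * s) * V s ≤ Real.exp (c * t 0) * V (t 0) := hW self_mem_Ici hs hs
  have hexp : Real.exp (-c * (s - t 0)) = Real.exp (c * t 0) / Real.exp (c * s) := by
    rw [← Real.exp_sub]; ring_nf
  rw [hexp, div_mul_eq_mul_div, le_div_iff₀ (Real.exp_pos _)]
  linarith

end Pieces

section Kronecker

lemma Matrix.kronecker_neg {R l m n p : Type*} [Ring R] (A : Matrix l m R) (B : Matrix n p R) :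
    A ⊗ₖ (-B) = -(A ⊗ₖ B) := by
  ext; simp

variable {R : Type*} [CommRing R] {m n : Type*} [Fintype m] [Fintype n] [DecidableEq m]

lemma lyapunov_kronecker_eq (S P D G : Matrix n n R) {H : Matrix m m R} {μ : R}
    (hH : H.IsSymm) (hP : P.IsSymm) (hG : G.IsSymm) (hPD : P * D = -μ • G) :
    (1 ⊗ₖ S + H ⊗ₖ D)ᵀ * (1 ⊗ₖ P) + (1 ⊗ₖ P) * (1 ⊗ₖ S + H ⊗ₖ D)
      = 1 ⊗ₖ (Sᵀ * P + P * S - (2 : R) • G) - (2 : R) • ((μ • H - 1) ⊗ₖ G) := by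
  have hDP : Dᵀ * P = -μ • G := by
    rw [← hP.eq, ← transpose_mul, hPD, transpose_smul, hG.eq]
  rw [transpose_add, ← kroneckerMap_transpose, ← kroneckerMap_transpose, transpose_one, hH.eq,
    add_mul, mul_add, ← mul_kronecker_mul, ← mul_kronecker_mul, ← mul_kronecker_mul,
    ← mul_kronecker_mul, hPD, hDP]
  ext ⟨i, k⟩ ⟨j, l⟩
  simp only [Matrix.one_mul, Matrix.mul_one, Matrix.add_apply, Matrix.sub_apply,
    Matrix.smul_apply, kroneckerMap_apply, smul_eq_mul]
  ring

end Kronecker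

section QuadraticForm

variable {ι : Type*}

lemma Matrix.PosSemidef.smul_sub_one [Fintype ι] [DecidableEq ι] {H : Matrix ι ι ℝ} {c μ : ℝ}
    (hH : (H - c • 1).PosSemidef) (hμ : 0 ≤ μ) (hμc : 1 ≤ μ * c) : (μ • H - 1).PosSemidef := by
  have h : μ • H - 1 = μ • (H - c • 1) + (μ * c - 1) • (1 : Matrix ι ι ℝ) := by module
  rw [h]
  exact (hH.smul hμ).add (PosSemidef.one.smul (sub_nonneg.mpr hμc))

variable [Fintype ι]

lemma Matrix.PosDef.exists_pos_mul_sq_norm_le {A : Matrix ι ι ℝ} (hA : A.PosDef) :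
    ∃ a > 0, ∀ x : ι → ℝ, a * ‖x‖ ^ 2 ≤ x ⬝ᵥ A *ᵥ x :=
  exists_pos_mul_sq_norm_le_of_homogeneous (by fun_prop)
    (fun c x => by simp only [mulVec_smul, dotProduct_smul, smul_dotProduct, smul_eq_mul]; ring)
    (fun x hx => by simpa using hA.dotProduct_mulVec_pos hx)

lemma Matrix.exists_pos_dotProduct_mulVec_le_mul_sq_norm (A : Matrix ι ι ℝ) :
    ∃ b > 0, ∀ x : ι → ℝ, x ⬝ᵥ A *ᵥ x ≤ b * ‖x‖ ^ 2 :=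
  exists_pos_le_mul_sq_norm_of_homogeneous (by fun_prop)
    (fun c x => by simp only [mulVec_smul, dotProduct_smul, smul_dotProduct, smul_eq_mul]; ring)

variable {m : Type*} [Fintype m] [DecidableEq m]

lemma dotProduct_lyapunov_kronecker_le {S P D G : Matrix ι ι ℝ} {H : Matrix m m ℝ} {μ : ℝ}
    (hH : H.IsSymm) (hP : P.IsSymm) (hG : G.PosSemidef) (hPD : P * D = -μ • G)
    (hK : (μ • H - 1).PosSemidef) (x : m × ι → ℝ) :
    x ⬝ᵥ ((1 ⊗ₖ S + H ⊗ₖ D)ᵀ * (1 ⊗ₖ P) + (1 ⊗ₖ P) * (1 ⊗ₖ S + H ⊗ₖ D)) *ᵥ x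
      ≤ x ⬝ᵥ (1 ⊗ₖ (Sᵀ * P + P * S - (2 : ℝ) • G)) *ᵥ x := by
  have hGs : G.IsSymm := isHermitian_iff_isSymm.mp hG.isHermitian
  rw [lyapunov_kronecker_eq S P D G hH hP hGs hPD, sub_mulVec, dotProduct_sub, sub_le_self_iff]
  simpa using ((hK.kronecker hG).smul zero_le_two).dotProduct_mulVec_nonneg x

lemma exists_pos_dotProduct_lyapunov_kronecker_le {κ : Type*} {S P D G : Matrix ι ι ℝ}
    {H : κ → Matrix m m ℝ} {μ : ℝ} (hP : P.IsSymm)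
    (hM : (-(Sᵀ * P + P * S - (2 : ℝ) • G)).PosDef) (hG : G.PosSemidef) (hPD : P * D = -μ • G)
    (hH : ∀ p, (H p).IsSymm) (hK : ∀ p, (μ • H p - 1).PosSemidef) :
    ∃ c > 0, ∀ p (x : m × ι → ℝ),
      x ⬝ᵥ ((1 ⊗ₖ S + H p ⊗ₖ D)ᵀ * (1 ⊗ₖ P) + (1 ⊗ₖ P) * (1 ⊗ₖ S + H p ⊗ₖ D)) *ᵥ x
        ≤ -c * (x ⬝ᵥ (1 ⊗ₖ P) *ᵥ x) := by
  obtain ⟨a, ha, haM⟩ :=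
    (PosDef.one.kronecker hM : ((1 : Matrix m m ℝ) ⊗ₖ _).PosDef).exists_pos_mul_sq_norm_le
  obtain ⟨b, hb, hbP⟩ := ((1 : Matrix m m ℝ) ⊗ₖ P).exists_pos_dotProduct_mulVec_le_mul_sq_norm
  refine ⟨a / b, div_pos ha hb, fun p x => ?_⟩
  have hlyap := dotProduct_lyapunov_kronecker_le (S := S) (hH p) hP hG hPD (hK p) x
  have hnorm := haM x
  rw [Matrix.kronecker_neg, neg_mulVec, dotProduct_neg] at hnorm
  have hP_le : a / b * (x ⬝ᵥ (1 ⊗ₖ P) *ᵥ x) ≤ a * ‖x‖ ^ 2 := by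
    rw [div_mul_eq_mul_div, div_le_iff₀ hb]
    nlinarith [hbP x]
  linarith

end QuadraticForm

lemma le_sqrt_div_mul_exp {q r B c s : ℝ} (hq : 0 < q) (hr : 0 ≤ r)
    (h : q * r ^ 2 ≤ Real.exp (-c * s) * B) : r ≤ √(B / q) * Real.exp (-(c / 2) * s) := by
  have hexp : Real.exp (-c * s) = Real.exp (-(c / 2) * s) ^ 2 := by
    rw [← Real.exp_nat_mul]; ring_nf
  have hB : 0 ≤ B / q := by
    have := mul_nonneg hq.le (sq_nonneg r)
    exact div_nonneg (nonneg_of_mul_nonneg_right (this.trans h) (Real.exp_pos _)) hq.le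
  calc r = √(r ^ 2) := (Real.sqrt_sq hr).symm
    _ ≤ √(B / q * Real.exp (-(c / 2) * s) ^ 2) := by
        gcongr
        rw [div_mul_eq_mul_div, le_div_iff₀ hq, ← hexp]
        linarith
    _ = √(B / q) * Real.exp (-(c / 2) * s) := by
        rw [Real.sqrt_mul hB, Real.sqrt_sq (Real.exp_pos _).le]

theorem stmt4_general {n₀ l N κ : ℕ}
    (S₀ P : Matrix (Fin n₀) (Fin n₀) ℝ) (F₀ : Matrix (Fin l) (Fin n₀) ℝ)
    (hP : P.PosDef)
    (hLyap : (-(S₀ᵀ * P + P * S₀ - (2:ℝ) • (F₀ᵀ * F₀))).PosDef)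
    (H : Fin κ → Matrix (Fin N) (Fin N) ℝ)
    (lb : ℝ) (hlb : 0 < lb)
    (heig : ∀ p, (H p - lb • 1).PosSemidef)
    (L₀ : Matrix (Fin n₀) (Fin l) ℝ)
    (hL₀ : L₀ = -(max (1/lb) 1) • (P⁻¹ * F₀ᵀ))
    (t : ℕ → ℝ) (ht0 : t 0 = 0) (htmono : StrictMono t) (htlim : Tendsto t atTop atTop)
    (σ : ℝ → Fin κ)
    (η : ℝ → Fin N × Fin n₀ → ℝ)
    (hηc : ContinuousOn η (Set.Ici 0))
    (hηd : ∀ i, ∀ s ∈ Set.Ioo (t i) (t (i+1)),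
      HasDerivAt η
        ((((1 : Matrix (Fin N) (Fin N) ℝ) ⊗ₖ S₀) + (H (σ s)) ⊗ₖ (L₀ * F₀)).mulVec (η s)) s) :
    ∃ c₀ ≥ (0:ℝ), ∃ lam₀ > (0:ℝ), ∀ s ≥ (0:ℝ), ‖η s‖ ≤ c₀ * Real.exp (-lam₀ * s) := by
  set μ := max (1 / lb) 1
  have hμlb : 1 ≤ μ * lb := by
    calc (1 : ℝ) = 1 / lb * lb := (one_div_mul_cancel hlb.ne').symm
      _ ≤ μ * lb := by gcongr; exact le_max_left _ _
  have hHsymm : ∀ p, (H p).IsSymm := fun p => by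
    simpa using (isHermitian_iff_isSymm.mp (heig p).isHermitian).add (isSymm_one.smul lb)
  have hPD : P * (L₀ * F₀) = -μ • (F₀ᵀ * F₀) := by
    rw [hL₀, Matrix.smul_mul, Matrix.mul_smul, Matrix.mul_assoc,
      mul_nonsing_inv_cancel_left _ _ ((isUnit_iff_isUnit_det P).mp hP.isUnit)]
  set Q : Matrix (Fin N × Fin n₀) (Fin N × Fin n₀) ℝ := 1 ⊗ₖ P
  obtain ⟨c, hc, hdecay⟩ := exists_pos_dotProduct_lyapunov_kronecker_le
    (isHermitian_iff_isSymm.mp hP.isHermitian) hLyap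
    (by simpa using posSemidef_conjTranspose_mul_self F₀) hPD hHsymm
    (fun p => (heig p).smul_sub_one (by positivity) hμlb)
  obtain ⟨q, hq, hqQ⟩ := (PosDef.one.kronecker hP : Q.PosDef).exists_pos_mul_sq_norm_le
  have hV := le_exp_mul_of_hasDerivAt_le (V := fun s => η s ⬝ᵥ Q *ᵥ η s) htmono.monotone htlim
    (by rw [ht0]; fun_prop) (fun i s hs => (hηd i s hs).dotProduct_mulVec_self _ Q)
    (fun i s _ => hdecay (σ s) (η s))
  refine ⟨√((η 0 ⬝ᵥ Q *ᵥ η 0) / q), Real.sqrt_nonneg _, c / 2, by positivity, fun s hs => ?_⟩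
  refine le_sqrt_div_mul_exp hq (norm_nonneg _) ((hqQ (η s)).trans ?_)
  simpa [ht0] using hV s (by rw [ht0]; exact hs)

theorem stmt4 {n₀ l N κ : ℕ}
    (S₀ P : Matrix (Fin n₀) (Fin n₀) ℝ) (F₀ : Matrix (Fin l) (Fin n₀) ℝ)
    (hP : P.PosDef)
    (hLyap : (-(S₀ᵀ * P + P * S₀ - (2:ℝ) • (F₀ᵀ * F₀))).PosDef)
    (H : Fin κ → Matrix (Fin N) (Fin N) ℝ)
    (hH : ∀ p, (H p).PosDef)
    (lb : ℝ) (hlb : 0 < lb)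
    (heig : ∀ p, (H p - lb • 1).PosSemidef)
    (L₀ : Matrix (Fin n₀) (Fin l) ℝ)
    (hL₀ : L₀ = -(max (1/lb) 1) • (P⁻¹ * F₀ᵀ))
    (t : ℕ → ℝ) (ht0 : t 0 = 0) (htmono : StrictMono t) (htlim : Tendsto t atTop atTop)
    (σ : ℝ → Fin κ) (hσ : ∀ i, ∀ s ∈ Set.Ico (t i) (t (i+1)), σ s = σ (t i))
    (η : ℝ → Fin N × Fin n₀ → ℝ)
    (hηc : ContinuousOn η (Set.Ici 0))
    (hηd : ∀ i, ∀ s ∈ Set.Ioo (t i) (t (i+1)),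
      HasDerivAt η
        ((((1 : Matrix (Fin N) (Fin N) ℝ) ⊗ₖ S₀) + (H (σ s)) ⊗ₖ (L₀ * F₀)).mulVec (η s)) s) :
    ∃ c₀ ≥ (0:ℝ), ∃ lam₀ > (0:ℝ), ∀ s ≥ (0:ℝ), ‖η s‖ ≤ c₀ * Real.exp (-lam₀ * s) :=
  stmt4_general S₀ P F₀ hP hLyap H lb hlb heig L₀ hL₀ t ht0 htmono htlim σ η hηc hηd
end

section
/- Let A ∈ ℝ^{n×n}, B ∈ ℝ^{n×m}, C ∈ ℝ^{l×n}, D ∈ ℝ^{l×m}, E ∈ ℝ^{n×q}, S ∈ ℝ^{q×q}, S₀ ∈ ℝ^{n₀×n₀}, F₀ ∈ ℝ^{l×n₀}. Suppose X₁, U₁ satisfy X₁S = AX₁ + BU₁ + E and 0 = CX₁ + DU₁, and X₂, U₂ satisfy X₂S₀ = AX₂ + BU₂ and 0 = CX₂ + DU₂ − F₀. Let K₁ be such that A + BK₁ is Hurwitz, K₂ = U₁ − K₁X₁, K₃ = U₂ − K₁X₂. Let d, r, x be differentiable with d' = S d, r' = S₀ r, x' = A x + B u + E d, where u(t) = K₁x(t)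 + K₂d(t) + K₃η(t) and η : [0,∞) → ℝ^{n₀} satisfies ‖η(t) − r(t)‖ ≤ c·e^{−λt} for some constants c > 0, λ > 0. Then e(t) = C x(t) + D u(t) − F₀ r(t) → 0 as t → ∞ for every initial condition. -/
/-!
With `z = x - X₁ d - X₂ r`, the regulator equations turn the closed loop into
`z' = (A + B K₁) z + B K₃ (η - r)` and the output error into
`e = (C + D K₁) z + D K₃ (η - r)`. The forcing term decays exponentially, and so does
`exp (t (A + B K₁))`: by Gelfand's formula, since the spectrum of `exp (A + B K₁)` lies in
`exp` of the spectrum of `A + B K₁`, hence in the open unit disc, some power of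
`exp (A + B K₁)` has norm `< 1`. Variation of constants then gives `z → 0`, hence `e → 0`.
-/

open Matrix Filter

/-- A real square matrix is Hurwitz if every eigenvalue of it, regarded as a
complex matrix, has strictly negative real part. -/
def IsHurwitz {ι : Type*} [Fintype ι] [DecidableEq ι] (M : Matrix ι ι ℝ) : Prop :=
  ∀ μ ∈ spectrum ℂ (M.map Complex.ofReal), μ.re < 0

open Set NormedSpace Topology
open scoped Matrix.Norms.Operator ENNReal

theorem exists_norm_pow_lt_one_of_forall_norm_lt_one {A : Type*} [NormedRing A]
    [NormedAlgebra ℂ A] [CompleteSpace A] {a : A} (h : ∀ z ∈ spectrum ℂ a, ‖z‖ < 1) :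
    ∃ k : ℕ, 0 < k ∧ ‖a ^ k‖ < 1 := by
  rcases subsingleton_or_nontrivial A with hA | hA
  · exact ⟨1, one_pos, by simp [Subsingleton.elim (a ^ 1) 0]⟩
  have hρ : spectralRadius ℂ a < 1 := by
    simpa using spectrum.spectralRadius_lt_of_forall_lt a (r := 1)
      fun z hz => by simpa [← NNReal.coe_lt_coe] using h z hz
  obtain ⟨k, hρk, hk⟩ := ((spectrum.pow_nnnorm_pow_one_div_tendsto_nhds_spectralRadius a
    |>.eventually_lt_const hρ).and (eventually_gt_atTop 0)).exists
  refine ⟨k, hk, ?_⟩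
  have : (‖a ^ k‖₊ : ℝ≥0∞) < 1 := by
    by_contra! h1
    exact (ENNReal.one_le_rpow h1 (by positivity)).not_gt hρk
  exact_mod_cast this

theorem Matrix.linfty_opNorm_map_eq {m n α β : Type*} [Fintype m] [Fintype n]
    [SeminormedAddCommGroup α] [SeminormedAddCommGroup β] (A : Matrix m n α) (f : α → β)
    (hf : ∀ a, ‖f a‖₊ = ‖a‖₊) : ‖A.map f‖ = ‖A‖ := by
  simp only [linfty_opNorm_def, map_apply, hf]

theorem HasDerivAt.matrix_mulVec {m n : Type*} [Fintype m] [Fintype n]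
    {A : ℝ → Matrix m n ℝ} {A' : Matrix m n ℝ} {v : ℝ → n → ℝ} {v' : n → ℝ} {t : ℝ}
    (hA : HasDerivAt A A' t) (hv : HasDerivAt v v' t) :
    HasDerivAt (fun s => A s *ᵥ v s) (A' *ᵥ v t + A t *ᵥ v') t := by
  let L : Matrix m n ℝ →L[ℝ] (n → ℝ) →L[ℝ] (m → ℝ) := (mulVecBilin ℝ ℝ).toContinuousBilinearMap
  exact (L.hasFDerivAt.comp_hasDerivAt t hA).clm_apply hv

theorem HasDerivAt.const_mulVec {m n : Type*} [Fintype m] [Fintype n] (X : Matrix m n ℝ)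
    {v : ℝ → n → ℝ} {v' : n → ℝ} {t : ℝ} (hv : HasDerivAt v v' t) :
    HasDerivAt (fun s => X *ᵥ v s) (X *ᵥ v') t := by
  simpa using (hasDerivAt_const t X).matrix_mulVec hv

theorem Filter.Tendsto.matrix_mulVec_zero {α m n : Type*} [Fintype n] {F : Filter α}
    (X : Matrix m n ℝ) {v : α → n → ℝ} (hv : Tendsto v F (𝓝 0)) :
    Tendsto (fun t => X *ᵥ v t) F (𝓝 0) :=
  (continuous_const.matrix_mulVec continuous_id).tendsto' 0 0 (mulVec_zero X) |>.comp hv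

section ExponentialDecay

variable {E : Type*} [SeminormedAddCommGroup E] {g : ℝ → E} {c ε : ℝ}

theorem norm_le_mul_exp_neg_of_le (hg : ∀ t ≥ 0, ‖g t‖ ≤ c * Real.exp (-ε * t)) {δ : ℝ}
    (hδ : δ ≤ ε) : ∀ t ≥ 0, ‖g t‖ ≤ c * Real.exp (-δ * t) := by
  have hc : 0 ≤ c := by simpa using (norm_nonneg _).trans (hg 0 le_rfl)
  intro t ht
  refine (hg t ht).trans (mul_le_mul_of_nonneg_left (Real.exp_le_exp.mpr ?_) hc)
  nlinarith

theorem tendsto_zero_of_norm_le_mul_exp_neg (hε : 0 < ε)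
    (hg : ∀ t ≥ 0, ‖g t‖ ≤ c * Real.exp (-ε * t)) : Tendsto g atTop (𝓝 0) := by
  have hexp : Tendsto (fun t => c * Real.exp (-ε * t)) atTop (𝓝 0) := by
    simpa using (tendsto_rpow_mul_exp_neg_mul_atTop_nhds_zero 0 ε hε).const_mul c
  exact squeeze_zero_norm' ((eventually_ge_atTop 0).mono hg) hexp

theorem norm_mulVec_le_mul_exp_neg {m n : Type*} [Fintype m] [Fintype n] (X : Matrix m n ℝ)
    {v : ℝ → n → ℝ} (hv : ∀ t ≥ 0, ‖v t‖ ≤ c * Real.exp (-ε * t)) :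
    ∀ t ≥ 0, ‖X *ᵥ v t‖ ≤ ‖X‖ * c * Real.exp (-ε * t) := fun t ht =>
  (linfty_opNorm_mulVec _ _).trans <| by
    rw [mul_assoc]; exact mul_le_mul_of_nonneg_left (hv t ht) (norm_nonneg _)

end ExponentialDecay

variable {ι : Type*} [Fintype ι] [DecidableEq ι]

theorem Matrix.exp_mulVec_of_mulVec_eq_smul {M : Matrix ι ι ℂ} {μ : ℂ} {w : ι → ℂ}
    (hw : M *ᵥ w = μ • w) : exp M *ᵥ w = Complex.exp μ • w := by
  let L : Matrix ι ι ℂ →L[ℂ] ι → ℂ := (mulVecBilin ℂ ℂ).flip w |>.toContinuousLinearMap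
  have hpow : ∀ k : ℕ, M ^ k *ᵥ w = μ ^ k • w := by
    intro k
    induction k with
    | zero => simp
    | succ k ih => rw [pow_succ', ← mulVec_mulVec, ih, mulVec_smul, hw, smul_smul, pow_succ]
  have hM := (exp_series_hasSum_exp' (𝕂 := ℂ) M).mapL L
  have hμ := (exp_series_hasSum_exp' (𝕂 := ℂ) μ).smul_const w
  rw [Complex.exp_eq_exp_ℂ]
  refine hM.unique (hμ.congr_fun fun k => ?_)
  simp [L, hpow, smul_smul]

theorem Matrix.spectrum_exp_subset (M : Matrix ι ι ℂ) :
    spectrum ℂ (exp M) ⊆ Complex.exp '' spectrum ℂ M := by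
  intro μ hμ
  rw [← spectrum_toLin', ← Module.End.hasEigenvalue_iff_mem_spectrum] at hμ
  -- `M` commutes with `exp M`, so it preserves the `μ`-eigenspace and has an eigenvector there.
  have hmaps : MapsTo (toLin' M) (Module.End.eigenspace (toLin' (exp M)) μ)
      (Module.End.eigenspace (toLin' (exp M)) μ) :=
    Module.End.mapsTo_genEigenspace_of_comm ((Commute.refl M).exp_left.map toLinAlgEquiv') μ 1
  have : Nontrivial (Module.End.eigenspace (toLin' (exp M)) μ) :=
    Submodule.nontrivial_iff_ne_bot.mpr hμ
  obtain ⟨ν, hν⟩ := Module.End.exists_eigenvalue ((toLin' M).restrict hmaps)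
  obtain ⟨⟨v, hvμ⟩, hv⟩ := hν.exists_hasEigenvector
  have hv0 : v ≠ 0 := fun h => hv.2 (Subtype.ext h)
  have hMv : M *ᵥ v = ν • v := congrArg Subtype.val hv.apply_eq_smul
  have hexpv : exp M *ᵥ v = μ • v := by simpa using Module.End.mem_eigenspace_iff.mp hvμ
  refine ⟨ν, ?_, smul_left_injective ℂ hv0 ((exp_mulVec_of_mulVec_eq_smul hMv).symm.trans hexpv)⟩
  rw [← spectrum_toLin', ← Module.End.hasEigenvalue_iff_mem_spectrum]
  exact Module.End.hasEigenvalue_of_hasEigenvector ⟨by simpa using hMv, hv0⟩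

theorem IsHurwitz.exists_norm_exp_smul_lt_one {M : Matrix ι ι ℝ} (hM : IsHurwitz M) :
    ∃ τ : ℝ, 0 < τ ∧ ‖exp (τ • M)‖ < 1 := by
  have hspec : ∀ z ∈ spectrum ℂ (exp (M.map Complex.ofReal)), ‖z‖ < 1 := by
    intro z hz
    obtain ⟨ν, hν, rfl⟩ := spectrum_exp_subset _ hz
    simpa [Complex.norm_exp] using hM ν hν
  obtain ⟨k, hk, hlt⟩ := exists_norm_pow_lt_one_of_forall_norm_lt_one hspec
  refine ⟨k, Nat.cast_pos.mpr hk, ?_⟩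
  have hmap : (exp ((k : ℝ) • M)).map Complex.ofReal = exp (M.map Complex.ofReal) ^ k := by
    rw [Nat.cast_smul_eq_nsmul, Matrix.exp_nsmul]
    exact (map_pow Complex.ofRealHom.mapMatrix _ k).trans <| congrArg (· ^ k) <|
      map_exp _ (continuous_id.matrix_map Complex.continuous_ofReal) M
  rwa [← hmap, linfty_opNorm_map_eq _ _ Complex.nnnorm_real] at hlt

theorem norm_exp_smul_add_mul_le {a : Matrix ι ι ℝ} {τ C : ℝ}
    (hC : ∀ s ∈ Icc 0 τ, ‖exp (s • a)‖ ≤ C) {s : ℝ} (hs : s ∈ Icc 0 τ) (k : ℕ) :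
    ‖exp ((s + k * τ) • a)‖ ≤ C * ‖exp (τ • a)‖ ^ k := by
  induction k with
  | zero => simpa using hC s hs
  | succ k ih =>
    have hcomm : Commute ((s + k * τ) • a) (τ • a) :=
      ((Commute.refl a).smul_left _).smul_right _
    calc ‖exp ((s + (k + 1 : ℕ) * τ) • a)‖ = ‖exp ((s + k * τ) • a) * exp (τ • a)‖ := by
          rw [← Matrix.exp_add_of_commute _ _ hcomm, ← add_smul]; push_cast; ring_nf
      _ ≤ C * ‖exp (τ • a)‖ ^ k * ‖exp (τ • a)‖ :=
          (norm_mul_le _ _).trans (mul_le_mul_of_nonneg_right ih (norm_nonneg _))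
      _ = C * ‖exp (τ • a)‖ ^ (k + 1) := by ring

theorem exists_norm_exp_smul_le_of_norm_exp_smul_lt_one {a : Matrix ι ι ℝ} {τ : ℝ}
    (hτ : 0 < τ) (ha : ‖exp (τ • a)‖ < 1) :
    ∃ K ε : ℝ, 0 < ε ∧ ∀ t ≥ 0, ‖exp (t • a)‖ ≤ K * Real.exp (-ε * t) := by
  -- `ρ ≥ ‖exp (τ • a)‖` is kept away from `0` so that its logarithm makes sense.
  set ρ := max ‖exp (τ • a)‖ (1 / 2)
  have hρ0 : 0 < ρ := lt_max_of_lt_right one_half_pos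
  have hρ1 : ρ < 1 := max_lt ha one_half_lt_one
  have hcont : Continuous fun s : ℝ => exp (s • a) :=
    exp_continuous.comp (continuous_id.smul continuous_const)
  obtain ⟨C, hC⟩ := (isCompact_Icc (a := (0 : ℝ)) (b := τ)).exists_bound_of_continuousOn
    hcont.continuousOn
  have hC0 : 0 ≤ C := (norm_nonneg _).trans (hC 0 (left_mem_Icc.mpr hτ.le))
  refine ⟨C / ρ, -Real.log ρ / τ, div_pos (neg_pos.mpr (Real.log_neg hρ0 hρ1)) hτ,
    fun t ht => ?_⟩
  set k := ⌊t / τ⌋₊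
  have hk : t / τ - 1 ≤ k := by linarith [Nat.lt_floor_add_one (t / τ)]
  have hs : t - k * τ ∈ Icc 0 τ := by
    have h1 := Nat.floor_le (div_nonneg ht hτ.le)
    have h2 := Nat.lt_floor_add_one (t / τ)
    rw [le_div_iff₀ hτ] at h1
    rw [div_lt_iff₀ hτ] at h2
    constructor <;> nlinarith
  have hρk : ρ ^ k ≤ Real.exp (-(-Real.log ρ / τ) * t) / ρ := by
    calc ρ ^ k = ρ ^ (k : ℝ) := (Real.rpow_natCast ρ k).symm
      _ ≤ ρ ^ (t / τ - 1) := Real.rpow_le_rpow_of_exponent_ge hρ0 hρ1.le hk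
      _ = Real.exp (-(-Real.log ρ / τ) * t) / ρ := by
          rw [Real.rpow_sub_one hρ0.ne', Real.rpow_def_of_pos hρ0]; ring_nf
  calc ‖exp (t • a)‖ = ‖exp ((t - k * τ + k * τ) • a)‖ := by rw [sub_add_cancel]
    _ ≤ C * ‖exp (τ • a)‖ ^ k := norm_exp_smul_add_mul_le hC hs k
    _ ≤ C * ρ ^ k := by gcongr; exact le_max_left _ _
    _ ≤ C * (Real.exp (-(-Real.log ρ / τ) * t) / ρ) := by gcongr
    _ = C / ρ * Real.exp (-(-Real.log ρ / τ) * t) := by ring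

theorem IsHurwitz.exists_norm_exp_smul_le {M : Matrix ι ι ℝ} (hM : IsHurwitz M) :
    ∃ K ε : ℝ, 0 < ε ∧ ∀ t ≥ 0, ‖exp (t • M)‖ ≤ K * Real.exp (-ε * t) :=
  let ⟨_, hτ, hτM⟩ := hM.exists_norm_exp_smul_lt_one
  exists_norm_exp_smul_le_of_norm_exp_smul_lt_one hτ hτM

theorem hasDerivAt_exp_smul_mulVec {M : Matrix ι ι ℝ} {z f : ℝ → ι → ℝ}
    (hz : ∀ t, HasDerivAt z (M *ᵥ z t + f t) t) (T t : ℝ) :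
    HasDerivAt (fun s => exp ((T - s) • M) *ᵥ z s) (exp ((T - t) • M) *ᵥ f t) t := by
  have hexp : HasDerivAt (fun s : ℝ => exp ((T - s) • M)) (-(exp ((T - t) • M) * M)) t :=
    ((hasDerivAt_exp_smul_const M (T - t)).scomp t ((hasDerivAt_id t).const_sub T)).congr_deriv
      (neg_one_smul ℝ _)
  convert hexp.matrix_mulVec (hz t) using 1
  rw [neg_mulVec, mulVec_add, ← mulVec_mulVec]
  abel

theorem norm_le_of_hasDerivAt_mulVec_add {M : Matrix ι ι ℝ} {K c δ : ℝ}
    (hM : ∀ t ≥ 0, ‖exp (t • M)‖ ≤ K * Real.exp (-δ * t)) {z f : ℝ → ι → ℝ}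
    (hf : ∀ t ≥ 0, ‖f t‖ ≤ c * Real.exp (-δ * t)) (hz : ∀ t, HasDerivAt z (M *ᵥ z t + f t) t)
    {T : ℝ} (hT : 0 ≤ T) :
    ‖z T‖ ≤ K * ‖z 0‖ * Real.exp (-δ * T) + K * c * (T * Real.exp (-δ * T)) := by
  -- Variation of constants: `w s = exp ((T - s) M) z s` has derivative `exp ((T - s) M) f s`.
  set w : ℝ → ι → ℝ := fun s => exp ((T - s) • M) *ᵥ z s
  have hw' : ∀ t ∈ Ico 0 T, ‖exp ((T - t) • M) *ᵥ f t‖ ≤ K * c * Real.exp (-δ * T) := by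
    intro t ⟨ht0, htT⟩
    calc ‖exp ((T - t) • M) *ᵥ f t‖ ≤ ‖exp ((T - t) • M)‖ * ‖f t‖ := linfty_opNorm_mulVec _ _
      _ ≤ K * Real.exp (-δ * (T - t)) * (c * Real.exp (-δ * t)) :=
          mul_le_mul (hM _ (by linarith)) (hf t ht0) (norm_nonneg _)
            ((norm_nonneg _).trans (hM _ (by linarith)))
      _ = K * c * Real.exp (-δ * T) := by rw [mul_mul_mul_comm, ← Real.exp_add]; ring_nf
  have hmvt := norm_image_sub_le_of_norm_deriv_le_segment'
    (fun t _ => (hasDerivAt_exp_smul_mulVec hz T t).hasDerivWithinAt) hw' T (right_mem_Icc.mpr hT)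
  have hw0 : ‖w 0‖ ≤ K * Real.exp (-δ * T) * ‖z 0‖ :=
    (linfty_opNorm_mulVec _ _).trans (mul_le_mul_of_nonneg_right (by simpa using hM T hT)
      (norm_nonneg _))
  calc ‖z T‖ = ‖(w T - w 0) + w 0‖ := by simp [w]
    _ ≤ K * c * Real.exp (-δ * T) * (T - 0) + K * Real.exp (-δ * T) * ‖z 0‖ :=
        (norm_add_le _ _).trans (add_le_add hmvt hw0)
    _ = K * ‖z 0‖ * Real.exp (-δ * T) + K * c * (T * Real.exp (-δ * T)) := by ring

theorem tendsto_zero_of_hasDerivAt_mulVec_add {M : Matrix ι ι ℝ} {K ε c lam : ℝ}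
    (hε : 0 < ε) (hM : ∀ t ≥ 0, ‖exp (t • M)‖ ≤ K * Real.exp (-ε * t)) {z f : ℝ → ι → ℝ}
    (hlam : 0 < lam) (hf : ∀ t ≥ 0, ‖f t‖ ≤ c * Real.exp (-lam * t))
    (hz : ∀ t, HasDerivAt z (M *ᵥ z t + f t) t) :
    Tendsto z atTop (𝓝 0) := by
  set δ := min ε lam
  have hδ : 0 < δ := lt_min hε hlam
  have hbound : Tendsto (fun T => K * ‖z 0‖ * Real.exp (-δ * T) +
      K * c * (T * Real.exp (-δ * T))) atTop (𝓝 0) := by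
    simpa using ((tendsto_rpow_mul_exp_neg_mul_atTop_nhds_zero 0 δ hδ).const_mul (K * ‖z 0‖)).add
      ((tendsto_rpow_mul_exp_neg_mul_atTop_nhds_zero 1 δ hδ).const_mul (K * c))
  refine squeeze_zero_norm' ((eventually_ge_atTop 0).mono fun T hT => ?_) hbound
  exact norm_le_of_hasDerivAt_mulVec_add (norm_le_mul_exp_neg_of_le hM (min_le_left _ _))
    (norm_le_mul_exp_neg_of_le hf (min_le_right _ _)) hz hT

section Regulator

variable {n m l q p : Type*} [Fintype n] [Fintype m] [Fintype q] [Fintype p]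

theorem regulator_closedLoop_eq {A : Matrix n n ℝ} {B : Matrix n m ℝ} {E : Matrix n q ℝ}
    {S : Matrix q q ℝ} {S₀ : Matrix p p ℝ} {X₁ : Matrix n q ℝ} {U₁ : Matrix m q ℝ}
    {X₂ : Matrix n p ℝ} {U₂ : Matrix m p ℝ} {K₁ : Matrix m n ℝ}
    (hreg₁ : X₁ * S = A * X₁ + B * U₁ + E) (hreg₂ : X₂ * S₀ = A * X₂ + B * U₂)
    (x : n → ℝ) (d : q → ℝ) (r η : p → ℝ) :
    A *ᵥ x + B *ᵥ (K₁ *ᵥ x + (U₁ - K₁ * X₁) *ᵥ d + (U₂ - K₁ * X₂) *ᵥ η) + E *ᵥ d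
        - X₁ *ᵥ (S *ᵥ d) - X₂ *ᵥ (S₀ *ᵥ r)
      = (A + B * K₁) *ᵥ (x - X₁ *ᵥ d - X₂ *ᵥ r) + (B * (U₂ - K₁ * X₂)) *ᵥ (η - r) := by
  rw [mulVec_mulVec, mulVec_mulVec, hreg₁, hreg₂]
  simp only [add_mulVec, sub_mulVec, mulVec_add, mulVec_sub, Matrix.mul_sub, ← mulVec_mulVec]
  abel

theorem regulator_output_eq [Fintype l] {C : Matrix l n ℝ} {D : Matrix l m ℝ}
    {F₀ : Matrix l p ℝ} {X₁ : Matrix n q ℝ} {U₁ : Matrix m q ℝ}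
    {X₂ : Matrix n p ℝ} {U₂ : Matrix m p ℝ} {K₁ : Matrix m n ℝ}
    (hreg₁ : C * X₁ + D * U₁ = 0) (hreg₂ : C * X₂ + D * U₂ = F₀)
    (x : n → ℝ) (d : q → ℝ) (r η : p → ℝ) :
    C *ᵥ x + D *ᵥ (K₁ *ᵥ x + (U₁ - K₁ * X₁) *ᵥ d + (U₂ - K₁ * X₂) *ᵥ η) - F₀ *ᵥ r
      = (C + D * K₁) *ᵥ (x - X₁ *ᵥ d - X₂ *ᵥ r) + (D * (U₂ - K₁ * X₂)) *ᵥ (η - r) := by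
  have h₁ : C *ᵥ (X₁ *ᵥ d) + D *ᵥ (U₁ *ᵥ d) = 0 := by
    rw [mulVec_mulVec, mulVec_mulVec, ← add_mulVec, hreg₁, zero_mulVec]
  subst hreg₂
  simp only [add_mulVec, sub_mulVec, mulVec_add, mulVec_sub, Matrix.mul_sub, ← mulVec_mulVec]
  linear_combination (norm := module) h₁

end Regulator

theorem stmt7_general {n m l q n₀ : ℕ}
    (A : Matrix (Fin n) (Fin n) ℝ) (B : Matrix (Fin n) (Fin m) ℝ)
    (C : Matrix (Fin l) (Fin n) ℝ) (D : Matrix (Fin l) (Fin m) ℝ)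
    (E : Matrix (Fin n) (Fin q) ℝ) (S : Matrix (Fin q) (Fin q) ℝ)
    (S₀ : Matrix (Fin n₀) (Fin n₀) ℝ) (F₀ : Matrix (Fin l) (Fin n₀) ℝ)
    (X₁ : Matrix (Fin n) (Fin q) ℝ) (U₁ : Matrix (Fin m) (Fin q) ℝ)
    (hreg11 : X₁ * S = A * X₁ + B * U₁ + E)
    (hreg12 : C * X₁ + D * U₁ = 0)
    (X₂ : Matrix (Fin n) (Fin n₀) ℝ) (U₂ : Matrix (Fin m) (Fin n₀) ℝ)
    (hreg21 : X₂ * S₀ = A * X₂ + B * U₂)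
    (hreg22 : C * X₂ + D * U₂ = F₀)
    (K₁ : Matrix (Fin m) (Fin n) ℝ) (hK₁ : IsHurwitz (A + B * K₁))
    (K₂ : Matrix (Fin m) (Fin q) ℝ) (hK₂ : K₂ = U₁ - K₁ * X₁)
    (K₃ : Matrix (Fin m) (Fin n₀) ℝ) (hK₃ : K₃ = U₂ - K₁ * X₂)
    (d : ℝ → Fin q → ℝ) (r : ℝ → Fin n₀ → ℝ) (x : ℝ → Fin n → ℝ) (u : ℝ → Fin m → ℝ)
    (η : ℝ → Fin n₀ → ℝ) (c lam : ℝ) (hlam : 0 < lam)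
    (hη : ∀ t ≥ (0:ℝ), ‖η t - r t‖ ≤ c * Real.exp (-lam * t))
    (hu : ∀ t, u t = K₁.mulVec (x t) + K₂.mulVec (d t) + K₃.mulVec (η t))
    (hd : ∀ t, HasDerivAt d (S.mulVec (d t)) t)
    (hr : ∀ t, HasDerivAt r (S₀.mulVec (r t)) t)
    (hx : ∀ t, HasDerivAt x (A.mulVec (x t) + B.mulVec (u t) + E.mulVec (d t)) t) :
    Tendsto (fun t => C.mulVec (x t) + D.mulVec (u t) - F₀.mulVec (r t)) atTop (nhds 0) := by
  subst hK₂ hK₃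
  obtain ⟨K, ε, hε, hdecay⟩ := hK₁.exists_norm_exp_smul_le
  have hz : ∀ t, HasDerivAt (fun s => x s - X₁ *ᵥ d s - X₂ *ᵥ r s)
      ((A + B * K₁) *ᵥ (x t - X₁ *ᵥ d t - X₂ *ᵥ r t) + (B * (U₂ - K₁ * X₂)) *ᵥ (η t - r t)) t :=
    fun t => by
      rw [← regulator_closedLoop_eq hreg11 hreg21, ← hu t]
      exact ((hx t).sub ((hd t).const_mulVec X₁)).sub ((hr t).const_mulVec X₂)
  have hz0 := tendsto_zero_of_hasDerivAt_mulVec_add hε hdecay hlam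
    (norm_mulVec_le_mul_exp_neg _ hη) hz
  have hgap := tendsto_zero_of_norm_le_mul_exp_neg hlam hη
  simp_rw [hu, regulator_output_eq hreg12 hreg22]
  simpa using (hz0.matrix_mulVec_zero _).add (hgap.matrix_mulVec_zero _)

theorem stmt7 {n m l q n₀ : ℕ}
    (A : Matrix (Fin n) (Fin n) ℝ) (B : Matrix (Fin n) (Fin m) ℝ)
    (C : Matrix (Fin l) (Fin n) ℝ) (D : Matrix (Fin l) (Fin m) ℝ)
    (E : Matrix (Fin n) (Fin q) ℝ) (S : Matrix (Fin q) (Fin q) ℝ)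
    (S₀ : Matrix (Fin n₀) (Fin n₀) ℝ) (F₀ : Matrix (Fin l) (Fin n₀) ℝ)
    (X₁ : Matrix (Fin n) (Fin q) ℝ) (U₁ : Matrix (Fin m) (Fin q) ℝ)
    (hreg11 : X₁ * S = A * X₁ + B * U₁ + E)
    (hreg12 : C * X₁ + D * U₁ = 0)
    (X₂ : Matrix (Fin n) (Fin n₀) ℝ) (U₂ : Matrix (Fin m) (Fin n₀) ℝ)
    (hreg21 : X₂ * S₀ = A * X₂ + B * U₂)
    (hreg22 : C * X₂ + D * U₂ = F₀)
    (K₁ : Matrix (Fin m) (Fin n) ℝ) (hK₁ : IsHurwitz (A + B * K₁))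
    (K₂ : Matrix (Fin m) (Fin q) ℝ) (hK₂ : K₂ = U₁ - K₁ * X₁)
    (K₃ : Matrix (Fin m) (Fin n₀) ℝ) (hK₃ : K₃ = U₂ - K₁ * X₂)
    (d : ℝ → Fin q → ℝ) (r : ℝ → Fin n₀ → ℝ) (x : ℝ → Fin n → ℝ) (u : ℝ → Fin m → ℝ)
    (η : ℝ → Fin n₀ → ℝ) (c lam : ℝ) (hc : 0 < c) (hlam : 0 < lam)
    (hη : ∀ t ≥ (0:ℝ), ‖η t - r t‖ ≤ c * Real.exp (-lam * t))
    (hu : ∀ t, u t = K₁.mulVec (x t) + K₂.mulVec (d t) + K₃.mulVec (η t))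
    (hd : ∀ t, HasDerivAt d (S.mulVec (d t)) t)
    (hr : ∀ t, HasDerivAt r (S₀.mulVec (r t)) t)
    (hx : ∀ t, HasDerivAt x (A.mulVec (x t) + B.mulVec (u t) + E.mulVec (d t)) t) :
    Tendsto (fun t => C.mulVec (x t) + D.mulVec (u t) - F₀.mulVec (r t)) atTop (nhds 0) :=
  stmt7_general A B C D E S S₀ F₀ X₁ U₁ hreg11 hreg12 X₂ U₂ hreg21 hreg22 K₁ hK₁ K₂ hK₂ K₃ hK₃ d r x
    u η c lam hlam hη hu hd hr hx
end

section
/- Let A ∈ ℝ^{n×n}, B ∈ ℝ^{n×m}, C ∈ ℝ^{l×n}, D ∈ ℝ^{l×m}, E ∈ ℝ^{n×q}, S ∈ ℝ^{q×q}, S₀ ∈ ℝ^{n₀×n₀}, F₀ ∈ ℝ^{l×n₀}. Suppose X₁, U₁ satisfy X₁S = AX₁ + BU₁ + E and 0 = CX₁ + DU₁, and X₂, U₂ satisfy X₂S₀ = AX₂ + BU₂ and 0 = CX₂ + DU₂ − F₀. Let K₁ ∈ ℝ^{m×n}, K₂ = U₁ − K₁X₁, K₃ = U₂ − K₁X₂.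 Let d, r, x, η be differentiable with d' = S d, r' = S₀ r, x' = A x + B u + E d, where u = K₁x + K₂d + K₃η. Then x̄(t) := x(t) − X₁d(t) − X₂r(t) satisfies x̄'(t) = (A + BK₁)x̄(t) + BK₃(η(t) − r(t)), and C x(t) + D u(t) − F₀ r(t) = (C + DK₁)x̄(t) + DK₃(η(t) − r(t)) for all t. -/
open Matrix

/-!
Write `x̄ = x - X₁ d - X₂ r`. Substituting `K₂ = U₁ - K₁X₁`, `K₃ = U₂ - K₁X₂` into the feedback law
gives `u - U₁ d - U₂ r = K₁ x̄ + K₃ (η - r)`. For any pair `(M, N)` this turns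
`M x + N u - (M X₁ + N U₁) d - (M X₂ + N U₂) r` into `(M + N K₁) x̄ + N K₃ (η - r)`.
The regulator equations identify the derivative of `x̄` with this expression for `(M, N) = (A, B)`
(the exosystem forcing `E d` cancels), and the output `C x + D u - F₀ r` with it for `(M, N) = (C, D)`.
-/

theorem HasDerivAt.matrix_mulVec_s8 {𝕜 : Type*} [NontriviallyNormedField 𝕜] [CompleteSpace 𝕜]
    {p k : Type*} [Fintype p] [Fintype k] (M : Matrix p k 𝕜)
    {f : 𝕜 → k → 𝕜} {f' : k → 𝕜} {t : 𝕜} (hf : HasDerivAt f f' t) :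
    HasDerivAt (fun s => M *ᵥ f s) (M *ᵥ f') t :=
  M.mulVecLin.toContinuousLinearMap.hasFDerivAt.comp_hasDerivAt t hf

section CoordinateChange

variable {R : Type*} [CommRing R] {ι κ μ σ ρ : Type*} [Fintype κ] [Fintype σ] [Fintype ρ]

theorem feedback_sub_steadyState_eq (K₁ : Matrix μ κ R) (X₁ : Matrix κ σ R) (U₁ : Matrix μ σ R)
    (X₂ : Matrix κ ρ R) (U₂ : Matrix μ ρ R) (x : κ → R) (d : σ → R) (r η : ρ → R) :
    K₁ *ᵥ x + (U₁ - K₁ * X₁) *ᵥ d + (U₂ - K₁ * X₂) *ᵥ η - U₁ *ᵥ d - U₂ *ᵥ r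
      = K₁ *ᵥ (x - X₁ *ᵥ d - X₂ *ᵥ r) + (U₂ - K₁ * X₂) *ᵥ (η - r) := by
  simp only [mulVec_sub, sub_mulVec, mulVec_mulVec]
  abel

theorem mulVec_add_mulVec_feedback_eq [Fintype μ] (M : Matrix ι κ R) (N : Matrix ι μ R)
    (K₁ : Matrix μ κ R) (X₁ : Matrix κ σ R) (U₁ : Matrix μ σ R) (X₂ : Matrix κ ρ R) (U₂ : Matrix μ ρ R)
    (x : κ → R) (d : σ → R) (r η : ρ → R) :
    M *ᵥ x + N *ᵥ (K₁ *ᵥ x + (U₁ - K₁ * X₁) *ᵥ d + (U₂ - K₁ * X₂) *ᵥ η)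
        - (M * X₁ + N * U₁) *ᵥ d - (M * X₂ + N * U₂) *ᵥ r
      = (M + N * K₁) *ᵥ (x - X₁ *ᵥ d - X₂ *ᵥ r) + (N * (U₂ - K₁ * X₂)) *ᵥ (η - r) := by
  calc _ = M *ᵥ (x - X₁ *ᵥ d - X₂ *ᵥ r)
          + N *ᵥ (K₁ *ᵥ x + (U₁ - K₁ * X₁) *ᵥ d + (U₂ - K₁ * X₂) *ᵥ η - U₁ *ᵥ d - U₂ *ᵥ r) := by
        simp only [mulVec_add, mulVec_sub, add_mulVec, mulVec_mulVec]
        abel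
    _ = _ := by
        rw [feedback_sub_steadyState_eq, mulVec_add, mulVec_mulVec, mulVec_mulVec, add_mulVec,
          add_assoc]

end CoordinateChange

theorem stmt8_general {n m l q n₀ : ℕ}
    (A : Matrix (Fin n) (Fin n) ℝ) (B : Matrix (Fin n) (Fin m) ℝ)
    (C : Matrix (Fin l) (Fin n) ℝ) (D : Matrix (Fin l) (Fin m) ℝ)
    (E : Matrix (Fin n) (Fin q) ℝ) (S : Matrix (Fin q) (Fin q) ℝ)
    (S₀ : Matrix (Fin n₀) (Fin n₀) ℝ) (F₀ : Matrix (Fin l) (Fin n₀) ℝ)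
    (X₁ : Matrix (Fin n) (Fin q) ℝ) (U₁ : Matrix (Fin m) (Fin q) ℝ)
    (hreg11 : X₁ * S = A * X₁ + B * U₁ + E)
    (hreg12 : C * X₁ + D * U₁ = 0)
    (X₂ : Matrix (Fin n) (Fin n₀) ℝ) (U₂ : Matrix (Fin m) (Fin n₀) ℝ)
    (hreg21 : X₂ * S₀ = A * X₂ + B * U₂)
    (hreg22 : C * X₂ + D * U₂ = F₀)
    (K₁ : Matrix (Fin m) (Fin n) ℝ)
    (K₂ : Matrix (Fin m) (Fin q) ℝ) (hK₂ : K₂ = U₁ - K₁ * X₁)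
    (K₃ : Matrix (Fin m) (Fin n₀) ℝ) (hK₃ : K₃ = U₂ - K₁ * X₂)
    (d : ℝ → Fin q → ℝ) (r : ℝ → Fin n₀ → ℝ) (x : ℝ → Fin n → ℝ)
    (η : ℝ → Fin n₀ → ℝ) (u : ℝ → Fin m → ℝ)
    (hu : ∀ t, u t = K₁.mulVec (x t) + K₂.mulVec (d t) + K₃.mulVec (η t))
    (hd : ∀ t, HasDerivAt d (S.mulVec (d t)) t)
    (hr : ∀ t, HasDerivAt r (S₀.mulVec (r t)) t)
    (hx : ∀ t, HasDerivAt x (A.mulVec (x t) + B.mulVec (u t) + E.mulVec (d t)) t) :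
    (∀ t, HasDerivAt (fun s => x s - X₁.mulVec (d s) - X₂.mulVec (r s))
        ((A + B * K₁).mulVec (x t - X₁.mulVec (d t) - X₂.mulVec (r t))
          + (B * K₃).mulVec (η t - r t)) t)
    ∧ (∀ t, C.mulVec (x t) + D.mulVec (u t) - F₀.mulVec (r t)
        = (C + D * K₁).mulVec (x t - X₁.mulVec (d t) - X₂.mulVec (r t))
          + (D * K₃).mulVec (η t - r t)) := by
  subst hK₂ hK₃
  refine ⟨fun t => ?_, fun t => ?_⟩
  · have hXd : X₁ *ᵥ (S *ᵥ d t) = (A * X₁ + B * U₁) *ᵥ d t + E *ᵥ d t := by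
      rw [mulVec_mulVec, hreg11, add_mulVec]
    have hXr : X₂ *ᵥ (S₀ *ᵥ r t) = (A * X₂ + B * U₂) *ᵥ r t := by rw [mulVec_mulVec, hreg21]
    have hderiv := ((hx t).sub ((hd t).matrix_mulVec_s8 X₁)).sub ((hr t).matrix_mulVec_s8 X₂)
    rw [hXd, hXr] at hderiv
    refine hderiv.congr_deriv ?_
    rw [hu t, ← mulVec_add_mulVec_feedback_eq]
    abel
  · have hd_out : (C * X₁ + D * U₁) *ᵥ d t = 0 := by rw [hreg12, zero_mulVec]
    rw [hu t, ← mulVec_add_mulVec_feedback_eq, hd_out, hreg22, sub_zero]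

theorem stmt8 {n m l q n₀ : ℕ}
    (A : Matrix (Fin n) (Fin n) ℝ) (B : Matrix (Fin n) (Fin m) ℝ)
    (C : Matrix (Fin l) (Fin n) ℝ) (D : Matrix (Fin l) (Fin m) ℝ)
    (E : Matrix (Fin n) (Fin q) ℝ) (S : Matrix (Fin q) (Fin q) ℝ)
    (S₀ : Matrix (Fin n₀) (Fin n₀) ℝ) (F₀ : Matrix (Fin l) (Fin n₀) ℝ)
    (X₁ : Matrix (Fin n) (Fin q) ℝ) (U₁ : Matrix (Fin m) (Fin q) ℝ)
    (hreg11 : X₁ * S = A * X₁ + B * U₁ + E)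
    (hreg12 : C * X₁ + D * U₁ = 0)
    (X₂ : Matrix (Fin n) (Fin n₀) ℝ) (U₂ : Matrix (Fin m) (Fin n₀) ℝ)
    (hreg21 : X₂ * S₀ = A * X₂ + B * U₂)
    (hreg22 : C * X₂ + D * U₂ = F₀)
    (K₁ : Matrix (Fin m) (Fin n) ℝ)
    (K₂ : Matrix (Fin m) (Fin q) ℝ) (hK₂ : K₂ = U₁ - K₁ * X₁)
    (K₃ : Matrix (Fin m) (Fin n₀) ℝ) (hK₃ : K₃ = U₂ - K₁ * X₂)
    (d : ℝ → Fin q → ℝ) (r : ℝ → Fin n₀ → ℝ) (x : ℝ → Fin n → ℝ)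
    (η : ℝ → Fin n₀ → ℝ) (u : ℝ → Fin m → ℝ)
    (hu : ∀ t, u t = K₁.mulVec (x t) + K₂.mulVec (d t) + K₃.mulVec (η t))
    (hd : ∀ t, HasDerivAt d (S.mulVec (d t)) t)
    (hr : ∀ t, HasDerivAt r (S₀.mulVec (r t)) t)
    (hη : Differentiable ℝ η)
    (hx : ∀ t, HasDerivAt x (A.mulVec (x t) + B.mulVec (u t) + E.mulVec (d t)) t) :
    (∀ t, HasDerivAt (fun s => x s - X₁.mulVec (d s) - X₂.mulVec (r s))
        ((A + B * K₁).mulVec (x t - X₁.mulVec (d t) - X₂.mulVec (r t))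
          + (B * K₃).mulVec (η t - r t)) t)
    ∧ (∀ t, C.mulVec (x t) + D.mulVec (u t) - F₀.mulVec (r t)
        = (C + D * K₁).mulVec (x t - X₁.mulVec (d t) - X₂.mulVec (r t))
          + (D * K₃).mulVec (η t - r t)) :=
  stmt8_general A B C D E S S₀ F₀ X₁ U₁ hreg11 hreg12 X₂ U₂ hreg21 hreg22 K₁ K₂ hK₂ K₃ hK₃ d r x η u
    hu hd hr hx
end

section
/- Let A ∈ ℝ^{n×n}, B ∈ ℝ^{n×m}, C ∈ ℝ^{l×n}, D ∈ ℝ^{l×m}, S ∈ ℝ^{q×q}. Suppose that for every eigenvalue λ ∈ ℂ of S, the (n+l)×(m+n) complex block matrix [[A − λI, B],[C, D]] has rank n + l. Then for any matrices E ∈ ℝ^{n×q} and F ∈ ℝ^{l×q}, there exist X ∈ ℝ^{n×q} and U ∈ ℝ^{m×q} satisfying XS = AX + BU + E and 0 = CX + DU + F. -/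
/-!
Writing the unknowns as one block matrix `Z`, the regulator equations say that the linear map
`Z ↦ M Z - J Z S` is onto. Over `ℂ`, a functional vanishing on its range is `Z ↦ tr (Y Z)` with
`Y M = S Y J`. For a row vector `v` in a generalized eigenspace of `S` for `μ`, induction on the
nilpotency order shows `v Y = 0`: each step reduces to `(v Y) (M - μ J) = 0`, and `M - μ J` has full
row rank. Since the generalized eigenspaces span, `Y = 0`. Real solutions are the real parts of
complex ones, because all coefficients are real.
-/

open Matrix

namespace Module.End

variable {K V W : Type*} [Field K] [AddCommGroup V] [Module K V] [AddCommGroup W] [Module K W]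

theorem maxGenEigenspace_le_ker {f : End K V} {g : V →ₗ[K] W} {μ : K}
    (h : ∀ v, g (f v - μ • v) = 0 → g v = 0) : f.maxGenEigenspace μ ≤ LinearMap.ker g := by
  suffices ∀ k : ℕ, ∀ v, ((f - μ • 1) ^ k) v = 0 → g v = 0 from fun v hv ↦
    let ⟨k, hk⟩ := (mem_maxGenEigenspace f μ v).1 hv; this k v hk
  intro k
  induction k with
  | zero => simp
  | succ k ih =>
    intro v hv
    rw [pow_succ, Module.End.mul_apply] at hv
    exact h v (by simpa using ih _ hv)

theorem maxGenEigenspace_eq_bot_of_notMem_spectrum [FiniteDimensional K V] {f : End K V} {μ : K}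
    (hμ : μ ∉ spectrum K f) : f.maxGenEigenspace μ = ⊥ := by
  rw [← hasEigenvalue_iff_mem_spectrum, HasEigenvalue,
    ← hasUnifEigenvalue_iff_hasUnifEigenvalue_one (k := ⊤) (by simp), HasUnifEigenvalue] at hμ
  exact not_not.1 hμ

theorem linearMap_eq_zero_of_forall_mem_spectrum [IsAlgClosed K] [FiniteDimensional K V]
    (f : End K V) (g : V →ₗ[K] W)
    (h : ∀ μ ∈ spectrum K f, ∀ v, g (f v - μ • v) = 0 → g v = 0) : g = 0 := by
  have hle (μ : K) : f.maxGenEigenspace μ ≤ LinearMap.ker g := by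
    by_cases hμ : μ ∈ spectrum K f
    · exact maxGenEigenspace_le_ker (h μ hμ)
    · simp [maxGenEigenspace_eq_bot_of_notMem_spectrum hμ]
  rw [← LinearMap.ker_eq_top, eq_top_iff, ← iSup_maxGenEigenspace_eq_top f]
  exact iSup_le hle

end Module.End

namespace Matrix

variable {K ι κ σ : Type*} [Field K]

theorem spectrum_vecMulLinear [Fintype σ] [DecidableEq σ] (S : Matrix σ σ K) :
    spectrum K S.vecMulLinear = spectrum K S := by
  ext μ
  rw [← mulVecLin_transpose, ← toLin'_apply', spectrum_toLin', mem_spectrum_iff_isRoot_charpoly,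
    mem_spectrum_iff_isRoot_charpoly, charpoly_transpose]

theorem vecMul_injective_of_rank_eq_card [Fintype ι] [Fintype κ] {N : Matrix ι κ K}
    (h : N.rank = Fintype.card ι) : Function.Injective N.vecMul := by
  rw [vecMul_injective_iff, linearIndependent_iff_card_eq_finrank_span, ← h,
    rank_eq_finrank_span_row]
  rfl

theorem exists_eq_trace_mul [Fintype κ] [Fintype σ] (φ : Module.Dual K (Matrix κ σ K)) :
    ∃ Y : Matrix σ κ K, ∀ Z, φ Z = (Y * Z).trace := by
  classical
  refine ⟨of fun j i ↦ φ (single i j 1), fun Z ↦ ?_⟩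
  conv_lhs => rw [matrix_eq_sum_single Z]
  simp only [map_sum, trace, diag, mul_apply, of_apply]
  rw [Finset.sum_comm]
  refine Finset.sum_congr rfl fun i _ ↦ Finset.sum_congr rfl fun j _ ↦ ?_
  rw [show single j i (Z j i) = Z j i • single j i (1 : K) by simp [smul_single], map_smul,
    smul_eq_mul, mul_comm]

theorem map_re_ofReal_mul [Fintype κ] (N : Matrix ι κ ℝ) (Z : Matrix κ σ ℂ) :
    (N.map Complex.ofReal * Z).map Complex.re = N * Z.map Complex.re := by
  ext i j
  simp [mul_apply, Complex.re_sum]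

theorem map_re_mul_ofReal [Fintype κ] (Z : Matrix ι κ ℂ) (N : Matrix κ σ ℝ) :
    (Z * N.map Complex.ofReal).map Complex.re = Z.map Complex.re * N := by
  ext i j
  simp [mul_apply, Complex.re_sum]

variable [Fintype κ] [Fintype σ]

/-- With `M = [[A, B], [C, D]]`, `J = [[1, 0], [0, 0]]` and `Z = [X; U]`, the regulator equations
read `regulatorMap M J S Z = -[E; F]`. -/
def regulatorMap (M J : Matrix ι κ K) (S : Matrix σ σ K) : Matrix κ σ K →ₗ[K] Matrix ι σ K :=
  mulLeftLinearMap σ K M - mulRightLinearMap ι K S ∘ₗ mulLeftLinearMap σ K J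

@[simp]
theorem regulatorMap_apply (M J : Matrix ι κ K) (S : Matrix σ σ K) (Z : Matrix κ σ K) :
    regulatorMap M J S Z = M * Z - J * Z * S :=
  rfl

theorem mul_eq_of_forall_trace_mul_regulatorMap [Fintype ι] {M J : Matrix ι κ K}
    {S : Matrix σ σ K} {Y : Matrix σ ι K} (h : ∀ Z, (Y * regulatorMap M J S Z).trace = 0) :
    Y * M = S * Y * J := by
  rw [ext_iff_trace_mul_right]
  intro Z
  have hZ := h Z
  rw [regulatorMap_apply, Matrix.mul_sub, trace_sub, sub_eq_zero, ← Matrix.mul_assoc,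
    ← Matrix.mul_assoc, trace_mul_comm _ S] at hZ
  simpa only [Matrix.mul_assoc] using hZ

theorem regulatorMap_surjective [IsAlgClosed K] [Fintype ι] [DecidableEq σ] {M J : Matrix ι κ K}
    {S : Matrix σ σ K} (h : ∀ μ ∈ spectrum K S, (M - μ • J).rank = Fintype.card ι) :
    Function.Surjective (regulatorMap M J S) := by
  rw [← LinearMap.range_eq_top]
  by_contra hne
  obtain ⟨φ, hφ, hφL⟩ :=
    Submodule.exists_dual_map_eq_bot_of_lt_top (lt_top_iff_ne_top.2 hne) inferInstance
  obtain ⟨Y, hY⟩ := exists_eq_trace_mul φ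
  have hYM : Y * M = S * Y * J := mul_eq_of_forall_trace_mul_regulatorMap fun Z ↦ by
    rw [← hY, ← Submodule.mem_bot K, ← hφL]
    exact Submodule.mem_map_of_mem (LinearMap.mem_range_self _ Z)
  have hvY : Y.vecMulLinear = 0 := by
    refine Module.End.linearMap_eq_zero_of_forall_mem_spectrum S.vecMulLinear _ ?_
    intro μ hμ v hv
    rw [spectrum_vecMulLinear] at hμ
    refine vecMul_injective_of_rank_eq_card (h μ hμ) ?_
    change (v ᵥ* Y) ᵥ* (M - μ • J) = 0 ᵥ* (M - μ • J)
    calc (v ᵥ* Y) ᵥ* (M - μ • J) = Y.vecMulLinear (S.vecMulLinear v - μ • v) ᵥ* J := by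
          simp only [vecMulLinear_apply, vecMul_sub, sub_vecMul, vecMul_vecMul, hYM,
            Matrix.mul_assoc, vecMul_smul, smul_vecMul]
      _ = 0 ᵥ* (M - μ • J) := by rw [hv, zero_vecMul, zero_vecMul]
  have hY0 : Y = 0 := by
    ext i j
    simpa using congr($hvY (Pi.single i 1) j)
  exact hφ (LinearMap.ext fun Z ↦ by simp [hY, hY0])

theorem regulatorMap_surjective_of_complexification {M J : Matrix ι κ ℝ} {S : Matrix σ σ ℝ}
    (h : Function.Surjective
      (regulatorMap (M.map Complex.ofReal) (J.map Complex.ofReal) (S.map Complex.ofReal))) :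
    Function.Surjective (regulatorMap M J S) := fun G ↦ by
  obtain ⟨Z, hZ⟩ := h (G.map Complex.ofReal)
  refine ⟨Z.map Complex.re, ?_⟩
  have hre := congr(($hZ).map Complex.re)
  rw [regulatorMap_apply, Matrix.map_sub _ Complex.sub_re, map_re_mul_ofReal, map_re_ofReal_mul,
    map_re_ofReal_mul, map_map] at hre
  simpa [Function.comp_def] using hre

end Matrix

open Matrix

theorem stmt16 {n m l q : ℕ}
    (A : Matrix (Fin n) (Fin n) ℝ) (B : Matrix (Fin n) (Fin m) ℝ)
    (C : Matrix (Fin l) (Fin n) ℝ) (D : Matrix (Fin l) (Fin m) ℝ)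
    (S : Matrix (Fin q) (Fin q) ℝ)
    (hrank : ∀ μ ∈ spectrum ℂ (S.map Complex.ofReal),
      (Matrix.fromBlocks (A.map Complex.ofReal - μ • 1) (B.map Complex.ofReal)
        (C.map Complex.ofReal) (D.map Complex.ofReal)).rank = n + l) :
    ∀ (E : Matrix (Fin n) (Fin q) ℝ) (F : Matrix (Fin l) (Fin q) ℝ),
      ∃ (X : Matrix (Fin n) (Fin q) ℝ) (U : Matrix (Fin m) (Fin q) ℝ),
        X * S = A * X + B * U + E ∧ C * X + D * U + F = 0 := by
  intro E F
  have hsurj : Function.Surjective (regulatorMap (fromBlocks A B C D) (fromBlocks 1 0 0 0) S) := by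
    refine regulatorMap_surjective_of_complexification (regulatorMap_surjective fun μ hμ ↦ ?_)
    rw [fromBlocks_map, fromBlocks_map, fromBlocks_smul, sub_eq_add_neg, fromBlocks_neg,
      fromBlocks_add]
    simpa [← sub_eq_add_neg] using hrank μ hμ
  obtain ⟨Z, hZ⟩ := hsurj (fromRows (-E) (-F))
  obtain ⟨X, U, rfl⟩ : ∃ X U, fromRows X U = Z := ⟨_, _, fromRows_toRows Z⟩
  have hXU : fromRows (A * X + B * U - X * S) (C * X + D * U) = fromRows (-E) (-F) := by
    rw [← hZ, regulatorMap_apply, fromBlocks_mul_fromRows, fromBlocks_mul_fromRows, fromRows_mul]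
    ext (i | i) j <;> simp
  obtain ⟨h₁, h₂⟩ := fromRows_inj hXU
  refine ⟨X, U, ?_, ?_⟩
  · rw [← neg_neg E, ← h₁]
    abel
  · rw [h₂, neg_add_cancel]
end
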